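/- Let x, y : ℝ → ℝ be continuously differentiable and 2π-periodic with ∫₀^{2π} x(θ) dθ = 0 and ∫₀^{2π} y(θ) dθ = 0. Then ∫₀^{2π} |x(θ) y'(θ)|² dθ ≤ π · (∫₀^{2π} |x'(θ)|² dθ) · (∫₀^{2π} |y'(θ)|² dθ). -/

import Mathlib

/-!
A mean-zero continuous periodic function `x` vanishes somewhere, say at `θ₀`. Every point of the
period `[θ₀, θ₀ + 2π]` lies within distance `π` of one of its endpoints, where `x` vanishes, so
the fundamental theorem of calculus and Cauchy–Schwarz on that short arc give the
Agmon-type bound `x(θ)² ≤ π ∫₀^{2π} |x'|²` for every `θ`. Integrating `x² |y'|²` against this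
uniform bound gives the inequality.
-/

open Real MeasureTheory Set

theorem Function.Periodic.deriv {𝕜 F : Type*} [NontriviallyNormedField 𝕜] [NormedAddCommGroup F]
    [NormedSpace 𝕜 F] {f : 𝕜 → F} {c : 𝕜} (h : Function.Periodic f c) :
    Function.Periodic (deriv f) c := fun t => by
  rw [← deriv_comp_add_const, h.funext]

theorem sq_intervalIntegral_le_mul_integral_sq {f : ℝ → ℝ} {a b : ℝ}
    (hf : IntervalIntegrable f volume a b)
    (hf2 : IntervalIntegrable (fun t => f t ^ 2) volume a b) :
    (∫ t in a..b, f t) ^ 2 ≤ (b - a) * ∫ t in a..b, f t ^ 2 := by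
  wlog hab : a ≤ b generalizing a b
  · have := this hf.symm hf2.symm (le_of_not_ge hab)
    rw [intervalIntegral.integral_symm, intervalIntegral.integral_symm a] at this
    linarith
  rcases hab.eq_or_lt with rfl | hab
  · simp
  set I := ∫ t in a..b, f t
  have hvar : ∫ t in a..b, ((b - a) * f t - I) ^ 2
      = (b - a) * ((b - a) * (∫ t in a..b, f t ^ 2) - I ^ 2) := by
    have hexp : (fun t => ((b - a) * f t - I) ^ 2)
        = fun t => ((b - a) ^ 2 * f t ^ 2 - 2 * (b - a) * I * f t) + I ^ 2 := by
      ext t; ring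
    rw [hexp, intervalIntegral.integral_add ((hf2.const_mul _).sub (hf.const_mul _))
      intervalIntegrable_const, intervalIntegral.integral_sub (hf2.const_mul _) (hf.const_mul _),
      intervalIntegral.integral_const_mul, intervalIntegral.integral_const_mul,
      intervalIntegral.integral_const, smul_eq_mul]
    ring
  have hnonneg : 0 ≤ ∫ t in a..b, ((b - a) * f t - I) ^ 2 :=
    intervalIntegral.integral_nonneg hab.le fun t _ => sq_nonneg _
  rw [hvar] at hnonneg
  linarith [nonneg_of_mul_nonneg_right hnonneg (sub_pos.2 hab)]

theorem sq_sub_le_mul_integral_deriv_sq {f : ℝ → ℝ} (hf : ContDiff ℝ 1 f) (a b : ℝ) :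
    (f b - f a) ^ 2 ≤ (b - a) * ∫ t in a..b, deriv f t ^ 2 := by
  have hdf : Continuous (deriv f) := hf.continuous_deriv le_rfl
  rw [← intervalIntegral.integral_deriv_eq_sub (fun t _ => hf.differentiable one_ne_zero t)
    (hdf.intervalIntegrable _ _)]
  exact sq_intervalIntegral_le_mul_integral_sq (hdf.intervalIntegrable _ _)
    ((hdf.pow 2).intervalIntegrable _ _)

theorem exists_mem_Ioo_eq_zero_of_intervalIntegral_eq_zero {f : ℝ → ℝ} (hf : Continuous f)
    {a b : ℝ} (hab : a < b) (h : ∫ t in a..b, f t = 0) : ∃ c ∈ Ioo a b, f c = 0 := by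
  have hF : ∀ u, HasDerivAt (fun u => ∫ t in a..u, f t) (f u) u := fun u =>
    intervalIntegral.integral_hasDerivAt_right (hf.intervalIntegrable _ _)
      hf.stronglyMeasurable.stronglyMeasurableAtFilter hf.continuousAt
  exact exists_hasDerivAt_eq_zero hab (fun u _ => (hF u).continuousAt.continuousWithinAt)
    (by simp [h]) fun u _ => hF u

theorem sq_le_half_mul_integral_deriv_sq {f : ℝ → ℝ} (hf : ContDiff ℝ 1 f) {a b θ : ℝ}
    (ha : f a = 0) (hb : f b = 0) (hθ : θ ∈ Icc a b) :
    f θ ^ 2 ≤ (b - a) / 2 * ∫ t in a..b, deriv f t ^ 2 := by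
  have hint : ∀ u v, IntervalIntegrable (fun t => deriv f t ^ 2) volume u v := fun _ _ =>
    ((hf.continuous_deriv le_rfl).pow 2).intervalIntegrable _ _
  have hnonneg : ∀ {u v}, u ≤ v → 0 ≤ ∫ t in u..v, deriv f t ^ 2 := fun huv =>
    intervalIntegral.integral_nonneg huv fun _ _ => sq_nonneg _
  have hsplit := intervalIntegral.integral_add_adjacent_intervals (hint a θ) (hint θ b)
  have hleft := hnonneg hθ.1
  have hright := hnonneg hθ.2
  rcases le_total (θ - a) ((b - a) / 2) with hshort | hshort
  · calc f θ ^ 2 = (f θ - f a) ^ 2 := by rw [ha, sub_zero]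
      _ ≤ (θ - a) * ∫ t in a..θ, deriv f t ^ 2 := sq_sub_le_mul_integral_deriv_sq hf a θ
      _ ≤ (b - a) / 2 * ∫ t in a..b, deriv f t ^ 2 :=
        mul_le_mul hshort (by linarith) hleft (by linarith [hθ.1, hθ.2])
  · calc f θ ^ 2 = (f b - f θ) ^ 2 := by rw [hb, zero_sub, neg_sq]
      _ ≤ (b - θ) * ∫ t in θ..b, deriv f t ^ 2 := sq_sub_le_mul_integral_deriv_sq hf θ b
      _ ≤ (b - a) / 2 * ∫ t in a..b, deriv f t ^ 2 :=
        mul_le_mul (by linarith) (by linarith) hright (by linarith [hθ.1, hθ.2])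

theorem sq_le_half_period_mul_integral_deriv_sq {f : ℝ → ℝ} {T : ℝ} (hf : ContDiff ℝ 1 f)
    (hper : Function.Periodic f T) (hT : 0 < T) {θ₀ : ℝ} (h₀ : f θ₀ = 0) (θ : ℝ) :
    f θ ^ 2 ≤ T / 2 * ∫ t in 0..T, deriv f t ^ 2 := by
  obtain ⟨θ', hθ', hθθ'⟩ := hper.exists_mem_Ico hT θ θ₀
  have hshift : ∫ t in θ₀..θ₀ + T, deriv f t ^ 2 = ∫ t in 0..T, deriv f t ^ 2 := by
    simpa using (hper.deriv.comp (· ^ 2)).intervalIntegral_add_eq θ₀ 0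
  have := sq_le_half_mul_integral_deriv_sq hf h₀ (by rwa [hper θ₀]) (Ico_subset_Icc_self hθ')
  rw [hθθ', ← hshift]
  simpa using this

theorem burgers_bilinear_bound_general
    (x y : ℝ → ℝ) (hx : ContDiff ℝ 1 x) (hy : ContDiff ℝ 1 y)
    (hperx : ∀ θ : ℝ, x (θ + 2 * π) = x θ)
    (hmeanx : (∫ θ in (0:ℝ)..(2 * π), x θ) = 0) :
    (∫ θ in (0:ℝ)..(2 * π), |x θ * deriv y θ| ^ 2)
      ≤ π * (∫ θ in (0:ℝ)..(2 * π), |deriv x θ| ^ 2)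
          * ∫ θ in (0:ℝ)..(2 * π), |deriv y θ| ^ 2 := by
  obtain ⟨θ₀, -, hθ₀⟩ :=
    exists_mem_Ioo_eq_zero_of_intervalIntegral_eq_zero hx.continuous two_pi_pos hmeanx
  have hsup : ∀ θ, x θ ^ 2 ≤ π * ∫ t in (0:ℝ)..(2 * π), deriv x t ^ 2 := fun θ => by
    simpa using sq_le_half_period_mul_integral_deriv_sq hx hperx two_pi_pos hθ₀ θ
  have hdy : Continuous (deriv y) := hy.continuous_deriv le_rfl
  simp only [sq_abs, mul_pow]
  rw [← intervalIntegral.integral_const_mul (π * ∫ t in (0:ℝ)..(2 * π), deriv x t ^ 2)]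
  refine intervalIntegral.integral_mono_on two_pi_pos.le ?_ ?_
    fun θ _ => mul_le_mul_of_nonneg_right (hsup θ) (sq_nonneg _)
  all_goals exact Continuous.intervalIntegrable (by fun_prop) _ _

/-- Proposition 2.1 of the paper: `‖B(x,y)‖² ≤ π ‖x‖_V² ‖y‖_V²`, i.e.
`∫₀^{2π} |x y'|² ≤ π (∫₀^{2π} |x'|²)(∫₀^{2π} |y'|²)` for mean-zero `C¹`
`2π`-periodic functions. -/
theorem burgers_bilinear_bound
    (x y : ℝ → ℝ) (hx : ContDiff ℝ 1 x) (hy : ContDiff ℝ 1 y)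
    (hperx : ∀ θ : ℝ, x (θ + 2 * π) = x θ)
    (hpery : ∀ θ : ℝ, y (θ + 2 * π) = y θ)
    (hmeanx : (∫ θ in (0:ℝ)..(2 * π), x θ) = 0)
    (hmeany : (∫ θ in (0:ℝ)..(2 * π), y θ) = 0) :
    (∫ θ in (0:ℝ)..(2 * π), |x θ * deriv y θ| ^ 2)
      ≤ π * (∫ θ in (0:ℝ)..(2 * π), |deriv x θ| ^ 2)
          * ∫ θ in (0:ℝ)..(2 * π), |deriv y θ| ^ 2 :=
  burgers_bilinear_bound_general x y hx hy hperx hmeanx
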